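/- arXiv:1209.4956 — 2 statements merged into one kernel-verified Lean document; each statement's English description precedes it below -/
import Mathlib

section
/- Relation (D): Let u be a 0-grassmannian affine permutation and let a < b < c < d be integers with b ≡ c (mod n), a ≡ d (mod n), and (b − a) + (d − c) = n. Then the composite u·t_{a,b}·t_{c,d} is defined if and only if the composite u·t_{d−n,c}·t_{b−n,a} is defined, and in that case the two resulting affine permutations are equal. -/
open Function

/-- The affine transposition `t_{a,b}` of period `n`: it exchanges `a + m*n` and
`b + m*n` for every `m : ℤ` and fixes all other integers. -/
def affT (n a b : ℤ) : ℤ → ℤ := fun i =>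
  if (i - a) % n = 0 then i - a + b
  else if (i - b) % n = 0 then i - b + a
  else i

/-- `u` is an affine permutation of period `n`: a bijection of `ℤ` with
`u (i + n) = u i + n` and `∑_{i=1}^{n} u i = n (n+1) / 2`. -/
def IsAffinePerm (n : ℤ) (u : ℤ → ℤ) : Prop :=
  Function.Bijective u ∧ (∀ i : ℤ, u (i + n) = u i + n) ∧
    ∑ i ∈ Finset.Icc (1 : ℤ) n, u i = n * (n + 1) / 2

/-- The operator `t_{a,b}` is defined at `u`:
`u a ≤ 0 < u b` and for every `a < i < b`, either `u i < u a` or `u i > u b`. -/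
def DefinedAt (u : ℤ → ℤ) (a b : ℤ) : Prop :=
  u a ≤ 0 ∧ 0 < u b ∧ ∀ i : ℤ, a < i → i < b → u i < u a ∨ u b < u i

/-- `u` is 0-grassmannian: the positions of the values `1, 2, …, n` under `u`
appear in increasing order, i.e. `u⁻¹ 1 < u⁻¹ 2 < ⋯ < u⁻¹ n`. -/
def IsGrassmannian (n : ℤ) (u : ℤ → ℤ) : Prop :=
  ∀ i j p q : ℤ, 1 ≤ i → i < j → j ≤ n → u p = i → u q = j → p < q

/-- The composite `u · t_{a,b} · t_{c,d}` is defined. -/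
def Def2 (n : ℤ) (u : ℤ → ℤ) (a b c d : ℤ) : Prop :=
  DefinedAt u a b ∧ DefinedAt (u ∘ affT n a b) c d

/-- The composite `u · t_{a₁,b₁} · t_{a₂,b₂} · t_{a₃,b₃}` is defined. -/
def Def3 (n : ℤ) (u : ℤ → ℤ) (a₁ b₁ a₂ b₂ a₃ b₃ : ℤ) : Prop :=
  DefinedAt u a₁ b₁ ∧ DefinedAt (u ∘ affT n a₁ b₁) a₂ b₂ ∧
    DefinedAt ((u ∘ affT n a₁ b₁) ∘ affT n a₂ b₂) a₃ b₃

/-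
Write `n = k + 1`. Since `c ≡ b` and `(b - a) + (d - c) = n`, we have `c = b + n p` and
`d = a + n + n p` with `p ≥ 1`, so `t_{d-n,c} = t_{a,b}` and `t_{b-n,a} = t_{c,d}` as affine
transpositions; this already gives the equality of the two composites. For definedness, every pair
involved is a translate by a multiple of `n` of `(a, b)` (for `u`) or of `(b, a + n)` (for
`v = u · t_{a,b}`), and translating a pair by `s` only shifts its two threshold inequalities by `s`.
Both composites are therefore defined iff `u a + n p ≤ 0 < u b`, and `u` separates `u a` from
`u b` on `(a, b)` and `v` separates `v b = u a` from `v (a + n) = u b + n` on `(b, a + n)`.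
-/

theorem map_add_mul_of_map_add_self {n : ℤ} {u : ℤ → ℤ} (hu : ∀ i, u (i + n) = u i + n)
    (m i : ℤ) : u (i + n * m) = u i + n * m := by
  have hper : Periodic (fun i => u i - i) n := fun i => by simp only [hu]; ring
  have := hper.int_mul m i
  rw [Int.cast_id, mul_comm m n] at this
  linarith

theorem definedAt_add_iff {u : ℤ → ℤ} {s : ℤ} (hu : ∀ i, u (i + s) = u i + s) (a b : ℤ) :
    DefinedAt u (a + s) (b + s) ↔
      u a + s ≤ 0 ∧ 0 < u b + s ∧ ∀ i, a < i → i < b → u i < u a ∨ u b < u i := by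
  unfold DefinedAt
  rw [hu a, hu b]
  refine and_congr Iff.rfl (and_congr Iff.rfl ⟨fun h i hai hib => ?_, fun h i hai hib => ?_⟩)
  · have := h (i + s) (by omega) (by omega)
    rw [hu] at this
    omega
  · have := h (i - s) (by omega) (by omega)
    have hi := hu (i - s)
    rw [sub_add_cancel] at hi
    omega

theorem affT_add_mul (n a b p : ℤ) : affT n (a + n * p) (b + n * p) = affT n a b := by
  funext i
  have hshift : ∀ x, (i - (x + n * p)) % n = (i - x) % n := fun x => by
    rw [show i - (x + n * p) = i - x + n * -p by ring, Int.add_mul_emod_self_left]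
  simp only [affT, hshift]
  split_ifs <;> ring

theorem affT_apply_add_self (n a b i : ℤ) : affT n a b (i + n) = affT n a b i + n := by
  have hshift : ∀ x, (i + n - x) % n = (i - x) % n := fun x => by
    rw [show i + n - x = i - x + n * 1 by ring, Int.add_mul_emod_self_left]
  simp only [affT, hshift]
  split_ifs <;> ring

theorem affT_apply_left (n a b : ℤ) : affT n a b a = b := by
  simp [affT]

theorem affT_apply_right {n a b : ℤ} (hab : ¬ n ∣ b - a) : affT n a b b = a := by
  have : (b - a) % n ≠ 0 := fun h => hab (Int.dvd_of_emod_eq_zero h)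
  simp [affT, this]

theorem comp_affT_add_self {n : ℤ} {u : ℤ → ℤ} (hu : ∀ i, u (i + n) = u i + n) (a b i : ℤ) :
    (u ∘ affT n a b) (i + n) = (u ∘ affT n a b) i + n := by
  rw [comp_apply, affT_apply_add_self, hu, comp_apply]

theorem comp_affT_comp_affT_eq {n a b c d p : ℤ} (hc : c = b + n * p)
    (hd : d = a + n + n * p) (u : ℤ → ℤ) :
    (u ∘ affT n a b) ∘ affT n c d = (u ∘ affT n (d - n) c) ∘ affT n (b - n) a := by
  have hfirst := affT_add_mul n a b p
  have hsecond := affT_add_mul n c d (-(p + 1))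
  rw [show a + n * p = d - n by omega, ← hc] at hfirst
  rw [show c + n * -(p + 1) = b - n by linarith, show d + n * -(p + 1) = a by linarith] at hsecond
  rw [hfirst, hsecond]

theorem def2_iff_def2 {n a b c d p : ℤ} (hc : c = b + n * p) (hd : d = a + n + n * p)
    {u : ℤ → ℤ} (hu : ∀ i, u (i + n) = u i + n) (hba : ¬ n ∣ b - a)
    (hn : 0 ≤ n) (hp : 0 ≤ p) :
    Def2 n u a b c d ↔ Def2 n u (d - n) c (b - n) a := by
  have hnp : 0 ≤ n * p := mul_nonneg hn hp
  have hvper := map_add_mul_of_map_add_self (comp_affT_add_self hu a b)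
  have hvb : (u ∘ affT n a b) b = u a := congrArg u (affT_apply_right hba)
  have hva : (u ∘ affT n a b) (a + n) = u b + n := by
    rw [comp_affT_add_self hu, comp_apply, affT_apply_left]
  have hfirst := affT_add_mul n a b p
  rw [show a + n * p = d - n by omega, ← hc] at hfirst
  have hvcd := definedAt_add_iff (hvper p) b (a + n)
  have hudc := definedAt_add_iff (map_add_mul_of_map_add_self hu p) a b
  have hvba := definedAt_add_iff (hvper (-1)) b (a + n)
  rw [← hc, ← hd] at hvcd
  rw [show a + n * p = d - n by omega, ← hc] at hudc
  rw [show b + n * -1 = b - n by ring, show a + n + n * -1 = a by ring] at hvba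
  unfold Def2
  rw [hfirst, hvcd, hudc, hvba, hvb, hva]
  unfold DefinedAt
  constructor <;> rintro ⟨⟨h₁, h₂, hwin⟩, h₃, h₄, hwin'⟩ <;>
    exact ⟨⟨by linarith, by linarith, hwin⟩, by linarith, by linarith, hwin'⟩

theorem stmt7_general (k : ℤ) (u : ℤ → ℤ)
    (hu : IsAffinePerm (k + 1) u)
    (a b c d : ℤ) (hab : a < b) (hbc : b < c) (hcd : c < d)
    (hbcmod : b % (k + 1) = c % (k + 1))
    (hsum : (b - a) + (d - c) = k + 1) :
    (Def2 (k + 1) u a b c d ↔ Def2 (k + 1) u (d - (k + 1)) c (b - (k + 1)) a) ∧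
      (Def2 (k + 1) u a b c d →
        (u ∘ affT (k + 1) a b) ∘ affT (k + 1) c d =
          (u ∘ affT (k + 1) (d - (k + 1)) c) ∘ affT (k + 1) (b - (k + 1)) a) := by
  generalize k + 1 = n at hu hbcmod hsum ⊢
  obtain ⟨p, hp⟩ : n ∣ c - b := Int.ModEq.dvd hbcmod
  have hc : c = b + n * p := by omega
  have hd : d = a + n + n * p := by omega
  have hp_nonneg : 0 ≤ p := (pos_of_mul_pos_right (show 0 < n * p by omega) (by omega)).le
  have hba : ¬ n ∣ b - a := fun h => by
    have := Int.eq_zero_of_dvd_of_nonneg_of_lt (by omega) (by omega) h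
    omega
  exact ⟨def2_iff_def2 hc hd hu.2.1 hba (by omega) hp_nonneg,
    fun _ => comp_affT_comp_affT_eq hc hd u⟩

theorem stmt7 (k : ℤ) (hk : 1 ≤ k) (u : ℤ → ℤ)
    (hu : IsAffinePerm (k + 1) u) (hg : IsGrassmannian (k + 1) u)
    (a b c d : ℤ) (hab : a < b) (hbc : b < c) (hcd : c < d)
    (hbcmod : b % (k + 1) = c % (k + 1)) (hadmod : a % (k + 1) = d % (k + 1))
    (hsum : (b - a) + (d - c) = k + 1) :
    (Def2 (k + 1) u a b c d ↔ Def2 (k + 1) u (d - (k + 1)) c (b - (k + 1)) a) ∧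
      (Def2 (k + 1) u a b c d →
        (u ∘ affT (k + 1) a b) ∘ affT (k + 1) c d =
          (u ∘ affT (k + 1) (d - (k + 1)) c) ∘ affT (k + 1) (b - (k + 1)) a) :=
  stmt7_general k u hu a b c d hab hbc hcd hbcmod hsum
end

section
/- Relation (X2): Let u be a 0-grassmannian affine permutation, let a < b < c < d be integers with b − a ≤ k and d − c ≤ k, and set q = (b − a) + (d − c). Suppose q < n, a ≡ d (mod n), and u(d) > 0. If the composite u·t_{a,b}·t_{c,d} is defined, then the composite u·t_{c,d}·t_{b−q,b} is defined and the two resulting affine permutations are equal. -/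
open Function

/-!
Write `σ = t_{c,d}` and `d = a + m n`. Then `b - q = c - m n ≡ c`, so `σ` sends `b - q` to `a`
and fixes `b`. Conjugating an affine transposition by a periodic bijection `σ` relabels it:
`σ ∘ t_{x,y} = t_{σ x, σ y} ∘ σ`; with `x = b - q`, `y = b` this is the identity of the two
composites. For definedness, `t_{a,b}` fixes every position in `[c, d)` and sends `d` to
`b + m n`, and `(b - q, a) + m n = (c, d)`, so the conditions for the new composite are
translates of those of the old one by periodicity of `u`.
-/

theorem Int.not_modEq_of_lt_of_lt {n i j t : ℤ} (h₁ : j + n * t < i) (h₂ : i < j + n * (t + 1)) :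
    ¬ i ≡ j [ZMOD n] := by
  intro h
  obtain ⟨s, rfl⟩ := Int.modEq_iff_add_fac.1 h.symm
  have hn : 0 < n := by linarith
  have : t < s := lt_of_mul_lt_mul_left (by linarith) hn.le
  have : s < t + 1 := lt_of_mul_lt_mul_left (by linarith) hn.le
  omega

theorem apply_add_mul_of_apply_add {f : ℤ → ℤ} {n : ℤ} (hf : ∀ i, f (i + n) = f i + n)
    (i t : ℤ) : f (i + n * t) = f i + n * t := by
  have hp : Periodic (fun i => f i - i) n := fun i => by simp only [hf]; ring
  have := hp.int_mul t i
  rw [Int.cast_id, mul_comm] at this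
  linarith

theorem modEq_of_apply_modEq {f : ℤ → ℤ} {n : ℤ} (hinj : Injective f)
    (hf : ∀ i, f (i + n) = f i + n) {i j : ℤ} (h : f i ≡ f j [ZMOD n]) : i ≡ j [ZMOD n] := by
  obtain ⟨t, ht⟩ := Int.modEq_iff_add_fac.1 h.symm
  have : i = j + n * t := hinj (by rw [ht, apply_add_mul_of_apply_add hf])
  rw [this]
  exact Int.add_modulus_mul_modEq_iff.2 rfl

section AffineTransposition

variable {n x y i : ℤ}

theorem sub_emod_eq_zero_iff_modEq : (i - x) % n = 0 ↔ i ≡ x [ZMOD n] := by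
  rw [← Int.dvd_iff_emod_eq_zero, ← Int.modEq_iff_dvd, Int.modEq_comm]

theorem affT_of_modEq_left (h : i ≡ x [ZMOD n]) : affT n x y i = i - x + y := by
  simp only [affT, sub_emod_eq_zero_iff_modEq, h, if_true]

theorem affT_of_modEq_right (hx : ¬ i ≡ x [ZMOD n]) (hy : i ≡ y [ZMOD n]) :
    affT n x y i = i - y + x := by
  simp only [affT, sub_emod_eq_zero_iff_modEq, hx, hy, if_true, if_false]

theorem affT_of_not_modEq (hx : ¬ i ≡ x [ZMOD n]) (hy : ¬ i ≡ y [ZMOD n]) : affT n x y i = i := by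
  simp only [affT, sub_emod_eq_zero_iff_modEq, hx, hy, if_false]

theorem affT_apply_add_mul_left (t : ℤ) : affT n x y (x + n * t) = y + n * t := by
  rw [affT_of_modEq_left (Int.add_modulus_mul_modEq_iff.2 rfl)]
  ring

theorem affT_apply_sub_mul_left (t : ℤ) : affT n x y (x - n * t) = y - n * t := by
  rw [affT_of_modEq_left (Int.sub_modulus_mul_modEq_iff.2 rfl)]
  ring

theorem affT_add_period (i : ℤ) : affT n x y (i + n) = affT n x y i + n := by
  simp only [affT, sub_emod_eq_zero_iff_modEq, Int.add_modulus_modEq_iff]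
  split_ifs <;> ring

theorem affT_involutive (h : ¬ x ≡ y [ZMOD n]) : Involutive (affT n x y) := by
  intro i
  by_cases hx : i ≡ x [ZMOD n]
  · have hy : i - x + y ≡ y [ZMOD n] := by simpa using (hx.sub_right x).add_right y
    rw [affT_of_modEq_left hx, affT_of_modEq_right (fun h' => h (h'.symm.trans hy)) hy]
    ring
  · by_cases hy : i ≡ y [ZMOD n]
    · have hx' : i - y + x ≡ x [ZMOD n] := by simpa using (hy.sub_right y).add_right x
      rw [affT_of_modEq_right hx hy, affT_of_modEq_left hx']
      ring
    · rw [affT_of_not_modEq hx hy, affT_of_not_modEq hx hy]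

theorem comp_affT_eq_affT_comp {σ : ℤ → ℤ} (hinj : Injective σ) (hσ : ∀ i, σ (i + n) = σ i + n)
    (x y : ℤ) :
    σ ∘ affT n x y = affT n (σ x) (σ y) ∘ σ := by
  have hmod {i j : ℤ} : σ i ≡ σ j [ZMOD n] ↔ i ≡ j [ZMOD n] :=
    ⟨modEq_of_apply_modEq hinj hσ, fun h => by
      obtain ⟨t, rfl⟩ := Int.modEq_iff_add_fac.1 h.symm
      rw [apply_add_mul_of_apply_add hσ]
      exact Int.add_modulus_mul_modEq_iff.2 rfl⟩
  funext i
  simp only [comp_apply]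
  by_cases hx : i ≡ x [ZMOD n]
  · obtain ⟨t, rfl⟩ := Int.modEq_iff_add_fac.1 hx.symm
    rw [affT_of_modEq_left hx, affT_of_modEq_left (hmod.2 hx),
      show x + n * t - x + y = y + n * t by ring, apply_add_mul_of_apply_add hσ,
      apply_add_mul_of_apply_add hσ]
    ring
  · by_cases hy : i ≡ y [ZMOD n]
    · obtain ⟨t, rfl⟩ := Int.modEq_iff_add_fac.1 hy.symm
      rw [affT_of_modEq_right hx hy, affT_of_modEq_right (mt hmod.1 hx) (hmod.2 hy),
        show y + n * t - y + x = x + n * t by ring, apply_add_mul_of_apply_add hσ,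
        apply_add_mul_of_apply_add hσ]
      ring
    · rw [affT_of_not_modEq hx hy, affT_of_not_modEq (mt hmod.1 hx) (mt hmod.1 hy)]

end AffineTransposition

section RelationX2

variable {n a b c d m : ℤ}

theorem affT_apply_of_mem_Ico (hab : a < b) (hq : b - a + (d - c) < n) (hd : d = a + n * m)
    {i : ℤ} (hci : c ≤ i) (hid : i < d) : affT n a b i = i :=
  affT_of_not_modEq (Int.not_modEq_of_lt_of_lt (t := m - 1) (by linarith) (by linarith))
    (Int.not_modEq_of_lt_of_lt (t := m - 1) (by linarith) (by linarith))

theorem affT_apply_of_mem_Ioc (hab : a < b) (hcd : c < d) (hq : b - a + (d - c) < n)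
    (hd : d = a + n * m) {i : ℤ} (hi₁ : c - n * m < i) (hi₂ : i ≤ b) (hia : i ≠ a) :
    affT n c d i = i := by
  refine affT_of_not_modEq (Int.not_modEq_of_lt_of_lt (t := -m) (by linarith) (by linarith)) ?_
  rcases hia.lt_or_gt with hia | hia
  · exact Int.not_modEq_of_lt_of_lt (t := -m - 1) (by linarith) (by linarith)
  · exact Int.not_modEq_of_lt_of_lt (t := -m) (by linarith) (by linarith)

theorem affT_comp_affT_eq (hab : a < b) (hcd : c < d) (hq : b - a + (d - c) < n)
    (hd : d = a + n * m) :
    affT n a b ∘ affT n c d = affT n c d ∘ affT n (c - n * m) b := by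
  have hcd' : ¬ c ≡ d [ZMOD n] := Int.not_modEq_of_lt_of_lt (t := -1) (by linarith) (by linarith)
  have hσe : affT n c d (c - n * m) = a := by
    rw [affT_apply_sub_mul_left, hd, add_sub_cancel_right]
  have hσb : affT n c d b = b :=
    affT_apply_of_mem_Ioc hab hcd hq hd (by linarith) le_rfl hab.ne'
  have := comp_affT_eq_affT_comp (affT_involutive hcd').injective affT_add_period (c - n * m) b
  rw [hσe, hσb] at this
  exact this.symm

variable {u : ℤ → ℤ}

theorem lt_or_lt_of_definedAt_comp_affT (hper : ∀ i, u (i + n) = u i + n) (hab : a < b)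
    (hq : b - a + (d - c) < n) (hd : d = a + n * m) (h : DefinedAt (u ∘ affT n a b) c d)
    {i : ℤ} (hci : c < i) (hid : i < d) : u i < u c ∨ u b + n * m < u i := by
  have hd' : affT n a b d = b + n * m := by rw [hd, affT_apply_add_mul_left]
  have := h.2.2 i hci hid
  rwa [comp_apply, comp_apply, comp_apply, affT_apply_of_mem_Ico hab hq hd le_rfl (hci.trans hid),
    hd', affT_apply_of_mem_Ico hab hq hd hci.le hid, apply_add_mul_of_apply_add hper] at this

theorem definedAt_of_definedAt_comp_affT (hper : ∀ i, u (i + n) = u i + n) (hab : a < b)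
    (hcd : c < d) (hq : b - a + (d - c) < n) (hd : d = a + n * m) (h₁ : DefinedAt u a b)
    (h₂ : DefinedAt (u ∘ affT n a b) c d) (hud : 0 < u d) : DefinedAt u c d := by
  have huc := h₂.1
  rw [comp_apply, affT_apply_of_mem_Ico hab hq hd le_rfl hcd] at huc
  have hud' : u d = u a + n * m := by rw [hd, apply_add_mul_of_apply_add hper]
  refine ⟨huc, hud, fun i hci hid => ?_⟩
  rcases lt_or_lt_of_definedAt_comp_affT hper hab hq hd h₂ hci hid with h | h
  · exact Or.inl h
  · exact Or.inr (by linarith [h₁.1, h₁.2.1])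

theorem definedAt_comp_affT (hper : ∀ i, u (i + n) = u i + n) (hab : a < b)
    (hcd : c < d) (hq : b - a + (d - c) < n) (hd : d = a + n * m) (h₁ : DefinedAt u a b)
    (h₂ : DefinedAt (u ∘ affT n a b) c d) (h₃ : DefinedAt u c d) :
    DefinedAt (u ∘ affT n c d) (c - n * m) b := by
  have hσe : affT n c d (c - n * m) = a := by
    rw [affT_apply_sub_mul_left, hd, add_sub_cancel_right]
  have hσb : affT n c d b = b :=
    affT_apply_of_mem_Ioc hab hcd hq hd (by linarith) le_rfl hab.ne'
  have hud : u d = u a + n * m := by rw [hd, apply_add_mul_of_apply_add hper]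
  have hue : u (c - n * m) = u c - n * m := by
    have := apply_add_mul_of_apply_add hper (c - n * m) m
    rw [sub_add_cancel] at this
    linarith
  have hua : u c - n * m < u a := by linarith [h₃.1, h₃.2.1]
  refine ⟨by rw [comp_apply, hσe]; exact h₁.1, by rw [comp_apply, hσb]; exact h₁.2.1,
    fun i hi₁ hi₂ => ?_⟩
  rw [comp_apply, comp_apply, comp_apply, hσe, hσb]
  rcases lt_trichotomy i a with hia | hia | hia
  · rw [affT_apply_of_mem_Ioc hab hcd hq hd hi₁ hi₂.le hia.ne]
    have := lt_or_lt_of_definedAt_comp_affT hper hab hq hd h₂ (i := i + n * m)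
      (by linarith) (by linarith)
    rw [apply_add_mul_of_apply_add hper] at this
    rcases this with h | h
    · exact Or.inl (by linarith)
    · exact Or.inr (by linarith)
  · have hac : ¬ a ≡ c [ZMOD n] := Int.not_modEq_of_lt_of_lt (t := -m) (by linarith) (by linarith)
    have had : a ≡ d [ZMOD n] := hd ▸ (Int.add_modulus_mul_modEq_iff.2 rfl).symm
    rw [hia, affT_of_modEq_right hac had, show a - d + c = c - n * m by linarith, hue]
    exact Or.inl hua
  · rw [affT_apply_of_mem_Ioc hab hcd hq hd hi₁ hi₂.le hia.ne']
    exact h₁.2.2 i hia hi₂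

end RelationX2

theorem stmt13_general (k : ℤ) (u : ℤ → ℤ)
    (hu : IsAffinePerm (k + 1) u)
    (a b c d : ℤ) (hab : a < b) (hcd : c < d)
    (hq : (b - a) + (d - c) < k + 1)
    (hmod : a % (k + 1) = d % (k + 1))
    (hud : 0 < u d)
    (hdef : Def2 (k + 1) u a b c d) :
    Def2 (k + 1) u c d (b - ((b - a) + (d - c))) b ∧
      (u ∘ affT (k + 1) a b) ∘ affT (k + 1) c d =
        (u ∘ affT (k + 1) c d) ∘ affT (k + 1) (b - ((b - a) + (d - c))) b := by
  obtain ⟨m, hd⟩ := Int.modEq_iff_add_fac.1 hmod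
  have hper := hu.2.1
  rw [show b - ((b - a) + (d - c)) = c - (k + 1) * m by linarith]
  have hcd_def := definedAt_of_definedAt_comp_affT hper hab hcd hq hd hdef.1 hdef.2 hud
  refine ⟨⟨hcd_def, definedAt_comp_affT hper hab hcd hq hd hdef.1 hdef.2 hcd_def⟩, ?_⟩
  rw [comp_assoc, comp_assoc, affT_comp_affT_eq hab hcd hq hd]

theorem stmt13 (k : ℤ) (hk : 1 ≤ k) (u : ℤ → ℤ)
    (hu : IsAffinePerm (k + 1) u) (hg : IsGrassmannian (k + 1) u)
    (a b c d : ℤ) (hab : a < b) (hbc : b < c) (hcd : c < d)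
    (hba : b - a ≤ k) (hdc : d - c ≤ k)
    (hq : (b - a) + (d - c) < k + 1)
    (hmod : a % (k + 1) = d % (k + 1))
    (hud : 0 < u d)
    (hdef : Def2 (k + 1) u a b c d) :
    Def2 (k + 1) u c d (b - ((b - a) + (d - c))) b ∧
      (u ∘ affT (k + 1) a b) ∘ affT (k + 1) c d =
        (u ∘ affT (k + 1) c d) ∘ affT (k + 1) (b - ((b - a) + (d - c))) b :=
  stmt13_general k u hu a b c d hab hcd hq hmod hud hdef
end
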